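/- Let n ≥ 1, m > 0, β > 0, ν > 0, Γ ≥ 0, and let U : ℝ^{3n} × ℝ^{4n} → ℝ be twice continuously differentiable. Define ρ(r, q, π) = exp(−β·(Σ_{j=1}^{n} Σ_{l=1}^{3} V_l(qʲ, πʲ) + U(r, q))). Then ρ satisfies the stationary Fokker–Planck equation of the gradient-Langevin thermostat: at every point of ℝ^{3n} × ℝ^{4n} × ℝ^{4n}, Σ_{j=1}^{n} { (ν/(mβ))·Σ_{i=1}^{3} ∂²ρ/∂(r_iʲ)² + (MΓ/β)·Σ_{i=1}^{4} ∂²ρ/∂(π_iʲ)² − div_{qʲ}((∇_{πʲ} Σ_{l=1}^{3} V_l(qʲ, πʲ))·ρ) + div_{πʲ}((∇_{qʲ} Σ_{l=1}^{3} V_l(qʲ, πʲ) + ∇_{qʲ} U(r, q) + Γ·J(qʲ)·πʲ)·ρ) } + (ν/m)·div_r((∇_r U(r, q))·ρ) = 0. -/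

import Mathlib

noncomputable section
open Matrix
open scoped InnerProductSpace BigOperators

/-- `S₁ q = (−q₁, q₀, q₃, −q₂)`. -/
def S1 : Matrix (Fin 4) (Fin 4) ℝ := !![0,-1,0,0; 1,0,0,0; 0,0,0,1; 0,0,-1,0]
/-- `S₂ q = (−q₂, −q₃, q₀, q₁)`. -/
def S2 : Matrix (Fin 4) (Fin 4) ℝ := !![0,0,-1,0; 0,0,0,-1; 1,0,0,0; 0,1,0,0]
/-- `S₃ q = (−q₃, q₂, −q₁, q₀)`. -/
def S3 : Matrix (Fin 4) (Fin 4) ℝ := !![0,0,0,-1; 0,0,1,0; 0,-1,0,0; 1,0,0,0]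
/-- The family `S l`, `l = 1, 2, 3` (0-indexed). -/
def S : Fin 3 → Matrix (Fin 4) (Fin 4) ℝ := ![S1, S2, S3]

/-- `J(q) = (Σₗ (1/Iₗ) (Sₗ q)(Sₗ q)ᵀ) / (Σₗ 1/Iₗ)`. -/
def Jmat (I : Fin 3 → ℝ) (q : Fin 4 → ℝ) : Matrix (Fin 4) (Fin 4) ℝ :=
  (∑ l : Fin 3, 1 / I l)⁻¹ • ∑ l : Fin 3, (1 / I l) • vecMulVec (S l *ᵥ q) (S l *ᵥ q)

/-- `M = 4 / (Σₗ 1/Iₗ)`. -/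
def Mc (I : Fin 3 → ℝ) : ℝ := 4 / ∑ l : Fin 3, 1 / I l

/-- `λₗ = (1/Iₗ) / (Σₘ 1/Iₘ)`. -/
def lam (I : Fin 3 → ℝ) (l : Fin 3) : ℝ := (1 / I l) / ∑ m : Fin 3, 1 / I m

/-- `Vₗ(q, π) = (1/(8 Iₗ)) (πᵀ Sₗ q)²`. -/
def V (I : Fin 3 → ℝ) (l : Fin 3) (q π : Fin 4 → ℝ) : ℝ :=
  (1 / (8 * I l)) * (π ⬝ᵥ (S l *ᵥ q)) ^ 2

/-- Phase space `(r, q, π)` of the gradient-Langevin system for `n` rigid molecules. -/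
abbrev GPhase (n : ℕ) :=
  (Fin n → Fin 3 → ℝ) × (Fin n → Fin 4 → ℝ) × (Fin n → Fin 4 → ℝ)

/-- Coordinate direction for `r_i^j`. -/
def er (n : ℕ) (j : Fin n) (i : Fin 3) : GPhase n := (Pi.single j (Pi.single i 1), 0, 0)
/-- Coordinate direction for `q_i^j`. -/
def eQ (n : ℕ) (j : Fin n) (i : Fin 4) : GPhase n := (0, Pi.single j (Pi.single i 1), 0)
/-- Coordinate direction for `π_i^j`. -/
def ePi (n : ℕ) (j : Fin n) (i : Fin 4) : GPhase n := (0, 0, Pi.single j (Pi.single i 1))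

/-- First-order partial derivative of `f` in the coordinate direction `v`. -/
def Dv (n : ℕ) (f : GPhase n → ℝ) (v : GPhase n) (x : GPhase n) : ℝ := fderiv ℝ f x v

/-- Second-order partial derivative of `f` in the coordinate direction `v`. -/
def D2v (n : ℕ) (f : GPhase n → ℝ) (v : GPhase n) (x : GPhase n) : ℝ :=
  fderiv ℝ (fun y => fderiv ℝ f y v) x v

/-- The invariant density `ρ(r, q, π) = exp(−β (Σⱼ Σₗ Vₗ(qʲ, πʲ) + U(r, q)))`. -/
def rho (n : ℕ) (β : ℝ) (I : Fin 3 → ℝ)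
    (U : (Fin n → Fin 3 → ℝ) × (Fin n → Fin 4 → ℝ) → ℝ) (x : GPhase n) : ℝ :=
  Real.exp (-β * ((∑ j, ∑ l, V I l (x.2.1 j) (x.2.2 j)) + U (x.1, x.2.1)))

/-- `i`-th component of `∇_π Σₗ Vₗ(q, π)`. -/
def gradPiV (I : Fin 3 → ℝ) (q π : Fin 4 → ℝ) (i : Fin 4) : ℝ :=
  fderiv ℝ (fun p : Fin 4 → ℝ => ∑ l : Fin 3, V I l q p) π (Pi.single i 1)

/-- `i`-th component of `∇_q Σₗ Vₗ(q, π)`. -/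
def gradQV (I : Fin 3 → ℝ) (q π : Fin 4 → ℝ) (i : Fin 4) : ℝ :=
  fderiv ℝ (fun q' : Fin 4 → ℝ => ∑ l : Fin 3, V I l q' π) q (Pi.single i 1)

/-! With `H = Σⱼ Σₗ Vₗ(qʲ, πʲ) + U(r, q)` we have `ρ = exp(−βH)`, hence `∇ρ = −β ρ ∇H`, and the
terms cancel in two groups. In every diffusion direction the flux `(1/β) ∇ρ + ρ ∇H` vanishes
identically, so the diffusion in `r` balances the drift `∇_r U`, and the diffusion in `π` balances
the thermostat force, because `Γ J(q) π = M Γ ∇_π Σₗ Vₗ` (this is what the constant `M` is for).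
What is left is the Hamiltonian transport `div_π(ρ ∇_q H) − div_q(ρ ∇_π H)`, which vanishes by the
symmetry of the second derivative of `H`. -/

section Gibbs

variable {E : Type*} [NormedAddCommGroup E] [NormedSpace ℝ E] {H : E → ℝ} (β : ℝ)

lemma fderiv_exp_neg_mul_apply {y : E} (hH : DifferentiableAt ℝ H y) (v : E) :
    fderiv ℝ (fun y => Real.exp (-β * H y)) y v = -β * fderiv ℝ H y v * Real.exp (-β * H y) := by
  rw [((hH.hasFDerivAt.const_mul (-β)).exp).fderiv]
  simp only [_root_.smul_apply, smul_eq_mul]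
  ring

lemma fderiv_fderiv_exp_neg_mul (hH : Differentiable ℝ H) (v w x : E) :
    fderiv ℝ (fun y => fderiv ℝ (fun y => Real.exp (-β * H y)) y v) x w
      = -β * fderiv ℝ (fun y => fderiv ℝ H y v * Real.exp (-β * H y)) x w := by
  have hflux : (fun y => fderiv ℝ (fun y => Real.exp (-β * H y)) y v)
      = (-β) • fun y => fderiv ℝ H y v * Real.exp (-β * H y) := by
    funext y
    rw [fderiv_exp_neg_mul_apply β (hH y), Pi.smul_apply, smul_eq_mul]
    ring
  rw [hflux, fderiv_const_smul_field]
  rfl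

lemma fokkerPlanck_diffusion_add_drift_eq_zero (hH : Differentiable ℝ H) (hβ : β ≠ 0)
    (c : ℝ) (v x : E) :
    c / β * fderiv ℝ (fun y => fderiv ℝ (fun y => Real.exp (-β * H y)) y v) x v
      + c * fderiv ℝ (fun y => fderiv ℝ H y v * Real.exp (-β * H y)) x v = 0 := by
  rw [fderiv_fderiv_exp_neg_mul β hH]
  field_simp
  ring

variable (hH : ContDiff ℝ 2 H)
include hH

lemma differentiable_fderiv_apply_mul_exp (v : E) :
    Differentiable ℝ (fun y => fderiv ℝ H y v * Real.exp (-β * H y)) := by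
  have h1 : Differentiable ℝ H := hH.differentiable two_ne_zero
  have h2 : Differentiable ℝ (fderiv ℝ H) :=
    (hH.fderiv_right (m := 1) one_add_one_eq_two.le).differentiable one_ne_zero
  fun_prop

lemma fderiv_fderiv_apply_mul_exp (u w x : E) :
    fderiv ℝ (fun y => fderiv ℝ H y u * Real.exp (-β * H y)) x w
      = fderiv ℝ (fderiv ℝ H) x w u * Real.exp (-β * H x)
        - β * fderiv ℝ H x u * fderiv ℝ H x w * Real.exp (-β * H x) := by
  have h1 : Differentiable ℝ H := hH.differentiable two_ne_zero
  have h2 : Differentiable ℝ (fderiv ℝ H) :=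
    (hH.fderiv_right (m := 1) one_add_one_eq_two.le).differentiable one_ne_zero
  rw [fderiv_fun_mul (by fun_prop) (by fun_prop),
    fderiv_clm_apply (h2 x) (differentiableAt_const u)]
  simp only [_root_.add_apply, _root_.smul_apply, smul_eq_mul, ContinuousLinearMap.comp_apply,
    ContinuousLinearMap.flip_apply, fderiv_const_apply, _root_.zero_apply, map_zero,
    fderiv_exp_neg_mul_apply β (h1 x)]
  ring

lemma fderiv_fderiv_apply_mul_exp_comm (v w x : E) :
    fderiv ℝ (fun y => fderiv ℝ H y v * Real.exp (-β * H y)) x w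
      = fderiv ℝ (fun y => fderiv ℝ H y w * Real.exp (-β * H y)) x v := by
  rw [fderiv_fderiv_apply_mul_exp β hH, fderiv_fderiv_apply_mul_exp β hH,
    hH.contDiffAt.isSymmSndFDerivAt (by simp) w v]
  ring

lemma fokkerPlanck_diffusion_sub_transport_add_drift_eq_zero (hβ : β ≠ 0) (c : ℝ) (v w x : E) :
    c / β * fderiv ℝ (fun y => fderiv ℝ (fun y => Real.exp (-β * H y)) y w) x w
      - fderiv ℝ (fun y => fderiv ℝ H y w * Real.exp (-β * H y)) x v
      + fderiv ℝ (fun y => (fderiv ℝ H y v + c * fderiv ℝ H y w) * Real.exp (-β * H y)) x w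
      = 0 := by
  have hsplit : (fun y => (fderiv ℝ H y v + c * fderiv ℝ H y w) * Real.exp (-β * H y))
      = fun y => fderiv ℝ H y v * Real.exp (-β * H y)
          + c * (fderiv ℝ H y w * Real.exp (-β * H y)) := by
    funext y
    ring
  have hv := differentiable_fderiv_apply_mul_exp β hH v x
  have hw := differentiable_fderiv_apply_mul_exp β hH w x
  rw [hsplit, fderiv_fun_add hv (hw.const_mul c), fderiv_const_mul hw]
  simp only [_root_.add_apply, _root_.smul_apply, smul_eq_mul]
  rw [fderiv_fderiv_apply_mul_exp_comm β hH v w]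
  linear_combination fokkerPlanck_diffusion_add_drift_eq_zero β
    (hH.differentiable two_ne_zero) hβ c w x

end Gibbs

def rotEnergy (I : Fin 3 → ℝ) (p : (Fin 4 → ℝ) × (Fin 4 → ℝ)) : ℝ := ∑ l, V I l p.1 p.2

lemma contDiff_rotEnergy (I : Fin 3 → ℝ) {k : WithTop ℕ∞} : ContDiff ℝ k (rotEnergy I) := by
  unfold rotEnergy V mulVec dotProduct
  fun_prop

lemma gradPiV_eq_fderiv_rotEnergy (I : Fin 3 → ℝ) (q π : Fin 4 → ℝ) (i : Fin 4) :
    gradPiV I q π i = fderiv ℝ (rotEnergy I) (q, π) (0, Pi.single i 1) := by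
  have h : HasFDerivAt (fun p => ∑ l, V I l q p)
      ((fderiv ℝ (rotEnergy I) (q, π)).comp (ContinuousLinearMap.inr ℝ _ _)) π :=
    ((contDiff_rotEnergy I).differentiable one_ne_zero (q, π)).hasFDerivAt.comp π
      (hasFDerivAt_prodMk_right q π)
  rw [gradPiV, h.fderiv]
  rfl

lemma gradQV_eq_fderiv_rotEnergy (I : Fin 3 → ℝ) (q π : Fin 4 → ℝ) (i : Fin 4) :
    gradQV I q π i = fderiv ℝ (rotEnergy I) (q, π) (Pi.single i 1, 0) := by
  have h : HasFDerivAt (fun q' => ∑ l, V I l q' π)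
      ((fderiv ℝ (rotEnergy I) (q, π)).comp (ContinuousLinearMap.inl ℝ _ _)) q :=
    (((contDiff_rotEnergy I).differentiable one_ne_zero (q, π)).hasFDerivAt.comp q
      (hasFDerivAt_prodMk_left (𝕜 := ℝ) q π) :)
  rw [gradQV, h.fderiv]
  rfl

lemma gradPiV_eq_sum (I : Fin 3 → ℝ) (q π : Fin 4 → ℝ) (i : Fin 4) :
    gradPiV I q π i = ∑ l, 1 / (4 * I l) * (π ⬝ᵥ (S l *ᵥ q)) * (S l *ᵥ q) i := by
  have h := HasFDerivAt.fun_sum (u := Finset.univ) fun l _ =>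
    ((HasFDerivAt.fun_sum (u := Finset.univ) fun k _ =>
      (hasFDerivAt_apply (𝕜 := ℝ) (F' := fun _ : Fin 4 => ℝ) k π).mul_const
        ((S l *ᵥ q) k)).pow 2).const_mul (1 / (8 * I l))
  unfold gradPiV V dotProduct
  rw [h.fderiv]
  simp only [_root_.sum_apply, _root_.smul_apply, smul_eq_mul, ContinuousLinearMap.proj_apply,
    Pi.single_apply, mul_ite, mul_one, mul_zero, Finset.sum_ite_eq', Finset.mem_univ, if_true]
  refine Finset.sum_congr rfl fun l _ => ?_
  ring

lemma Jmat_mulVec_apply (I : Fin 3 → ℝ) (q π : Fin 4 → ℝ) (i : Fin 4) :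
    (Jmat I q *ᵥ π) i = Mc I * gradPiV I q π i := by
  rw [gradPiV_eq_sum]
  simp only [Jmat, Mc, Matrix.smul_mulVec, Matrix.sum_mulVec, Pi.smul_apply, Finset.sum_apply,
    smul_eq_mul, Matrix.vecMulVec_mulVec, op_smul_eq_mul, Finset.mul_sum]
  refine Finset.sum_congr rfl fun l _ => ?_
  rw [dotProduct_comm]
  field_simp

section Phase

variable {n : ℕ}

def molecule (j : Fin n) : GPhase n →L[ℝ] (Fin 4 → ℝ) × (Fin 4 → ℝ) :=
  ((ContinuousLinearMap.proj j).comp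
    ((ContinuousLinearMap.fst ℝ _ _).comp (ContinuousLinearMap.snd ℝ _ _))).prod
  ((ContinuousLinearMap.proj j).comp
    ((ContinuousLinearMap.snd ℝ _ _).comp (ContinuousLinearMap.snd ℝ _ _)))

@[simp] lemma molecule_apply (j : Fin n) (y : GPhase n) : molecule j y = (y.2.1 j, y.2.2 j) := rfl

def configuration : GPhase n →L[ℝ] (Fin n → Fin 3 → ℝ) × (Fin n → Fin 4 → ℝ) :=
  (ContinuousLinearMap.fst ℝ _ _).prod
    ((ContinuousLinearMap.fst ℝ _ _).comp (ContinuousLinearMap.snd ℝ _ _))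

@[simp] lemma configuration_apply (y : GPhase n) : configuration y = (y.1, y.2.1) := rfl

def energy (I : Fin 3 → ℝ) (U : (Fin n → Fin 3 → ℝ) × (Fin n → Fin 4 → ℝ) → ℝ)
    (y : GPhase n) : ℝ :=
  ∑ j, rotEnergy I (molecule j y) + U (configuration y)

lemma rho_eq_exp_energy (β : ℝ) (I : Fin 3 → ℝ)
    (U : (Fin n → Fin 3 → ℝ) × (Fin n → Fin 4 → ℝ) → ℝ) :
    rho n β I U = fun y => Real.exp (-β * energy I U y) := rfl

variable {I : Fin 3 → ℝ} {U : (Fin n → Fin 3 → ℝ) × (Fin n → Fin 4 → ℝ) → ℝ}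

lemma contDiff_energy {k : WithTop ℕ∞} (hU : ContDiff ℝ k U) : ContDiff ℝ k (energy I U) :=
  (ContDiff.sum fun j _ => (contDiff_rotEnergy I).comp (molecule j).contDiff).add
    (hU.comp configuration.contDiff)

variable (hU : Differentiable ℝ U) (y : GPhase n)
include hU

lemma hasFDerivAt_energy :
    HasFDerivAt (energy I U)
      (∑ j, (fderiv ℝ (rotEnergy I) (molecule j y)).comp (molecule j)
        + (fderiv ℝ U (configuration y)).comp configuration) y :=
  (HasFDerivAt.fun_sum fun j _ => ((contDiff_rotEnergy I).differentiable one_ne_zero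
    (molecule j y)).hasFDerivAt.comp y (molecule j).hasFDerivAt).add
    ((hU _).hasFDerivAt.comp y configuration.hasFDerivAt)

lemma fderiv_energy_apply (v : GPhase n) :
    fderiv ℝ (energy I U) y v
      = ∑ j, fderiv ℝ (rotEnergy I) (y.2.1 j, y.2.2 j) (v.2.1 j, v.2.2 j)
        + fderiv ℝ U (y.1, y.2.1) (v.1, v.2.1) := by
  simp [(hasFDerivAt_energy hU y).fderiv]

variable (j : Fin n)

lemma fderiv_energy_er (i : Fin 3) :
    fderiv ℝ (energy I U) y (er n j i)
      = fderiv ℝ U (y.1, y.2.1) (Pi.single j (Pi.single i 1), 0) := by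
  rw [fderiv_energy_apply hU]
  simp [er, Prod.mk_zero_zero]

lemma fderiv_energy_ePi (i : Fin 4) :
    fderiv ℝ (energy I U) y (ePi n j i) = gradPiV I (y.2.1 j) (y.2.2 j) i := by
  rw [fderiv_energy_apply hU, Fintype.sum_eq_single j fun j' hj' => by
    simp [ePi, hj', Prod.mk_zero_zero]]
  simp [ePi, gradPiV_eq_fderiv_rotEnergy, Prod.mk_zero_zero]

lemma fderiv_energy_eQ (i : Fin 4) :
    fderiv ℝ (energy I U) y (eQ n j i)
      = gradQV I (y.2.1 j) (y.2.2 j) i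
        + fderiv ℝ U (y.1, y.2.1) (0, Pi.single j (Pi.single i 1)) := by
  rw [fderiv_energy_apply hU, Fintype.sum_eq_single j fun j' hj' => by
    simp [eQ, hj', Prod.mk_zero_zero]]
  simp [eQ, gradQV_eq_fderiv_rotEnergy]

end Phase

theorem stmt16_general (n : ℕ) (m β ν Γ : ℝ)
    (hβ : 0 < β)
    (I : Fin 3 → ℝ)
    (U : (Fin n → Fin 3 → ℝ) × (Fin n → Fin 4 → ℝ) → ℝ) (hU : ContDiff ℝ 2 U)
    (x : GPhase n) :
    (∑ j : Fin n,
      ((ν / (m * β)) * ∑ i : Fin 3, D2v n (rho n β I U) (er n j i) x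
       + (Mc I * Γ / β) * ∑ i : Fin 4, D2v n (rho n β I U) (ePi n j i) x
       - ∑ i : Fin 4,
           Dv n (fun y => gradPiV I (y.2.1 j) (y.2.2 j) i * rho n β I U y) (eQ n j i) x
       + ∑ i : Fin 4,
           Dv n (fun y =>
             (gradQV I (y.2.1 j) (y.2.2 j) i
              + fderiv ℝ U (y.1, y.2.1) (0, Pi.single j (Pi.single i 1))
              + Γ * (Jmat I (y.2.1 j) *ᵥ y.2.2 j) i) * rho n β I U y)
             (ePi n j i) x))
    + (ν / m) * ∑ j : Fin n, ∑ i : Fin 3,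
        Dv n (fun y =>
          fderiv ℝ U (y.1, y.2.1) (Pi.single j (Pi.single i 1), 0) * rho n β I U y)
          (er n j i) x
    = 0 := by
  have hH : ContDiff ℝ 2 (energy I U) := contDiff_energy hU
  have hU' : Differentiable ℝ U := hU.differentiable two_ne_zero
  simp only [Dv, D2v, rho_eq_exp_energy, Jmat_mulVec_apply, ← mul_assoc Γ (Mc I),
    ← fderiv_energy_er (I := I) hU', ← fderiv_energy_ePi hU', ← fderiv_energy_eQ hU']
  rw [Finset.mul_sum, ← Finset.sum_add_distrib]
  refine Finset.sum_eq_zero fun j _ => ?_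
  have hr := Fintype.sum_eq_zero _ fun i => fokkerPlanck_diffusion_add_drift_eq_zero β
    (hH.differentiable two_ne_zero) hβ.ne' (ν / m) (er n j i) x
  have hp := Fintype.sum_eq_zero _ fun i => fokkerPlanck_diffusion_sub_transport_add_drift_eq_zero
    β hH hβ.ne' (Γ * Mc I) (eQ n j i) (ePi n j i) x
  simp only [Finset.sum_add_distrib, Finset.sum_sub_distrib, ← Finset.mul_sum] at hr hp
  linear_combination hr + hp

/-- The density `ρ ∝ exp(−β(Σ V + U))` satisfies the stationary Fokker–Planck equation of
the gradient-Langevin thermostat `L*ρ = 0`. -/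
theorem stmt16 (n : ℕ) (hn : 1 ≤ n) (m β ν Γ : ℝ)
    (hm : 0 < m) (hβ : 0 < β) (hν : 0 < ν) (hΓ : 0 ≤ Γ)
    (I : Fin 3 → ℝ) (hI : ∀ l, 0 < I l)
    (U : (Fin n → Fin 3 → ℝ) × (Fin n → Fin 4 → ℝ) → ℝ) (hU : ContDiff ℝ 2 U)
    (x : GPhase n) :
    (∑ j : Fin n,
      ((ν / (m * β)) * ∑ i : Fin 3, D2v n (rho n β I U) (er n j i) x
       + (Mc I * Γ / β) * ∑ i : Fin 4, D2v n (rho n β I U) (ePi n j i) x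
       - ∑ i : Fin 4,
           Dv n (fun y => gradPiV I (y.2.1 j) (y.2.2 j) i * rho n β I U y) (eQ n j i) x
       + ∑ i : Fin 4,
           Dv n (fun y =>
             (gradQV I (y.2.1 j) (y.2.2 j) i
              + fderiv ℝ U (y.1, y.2.1) (0, Pi.single j (Pi.single i 1))
              + Γ * (Jmat I (y.2.1 j) *ᵥ y.2.2 j) i) * rho n β I U y)
             (ePi n j i) x))
    + (ν / m) * ∑ j : Fin n, ∑ i : Fin 3,
        Dv n (fun y =>
          fderiv ℝ U (y.1, y.2.1) (Pi.single j (Pi.single i 1), 0) * rho n β I U y)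
          (er n j i) x
    = 0 :=
  stmt16_general n m β ν Γ hβ I U hU x
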